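/- With F₂(u,x³,xⁿ) = −(ε/(2p₃+1))(x³ − εu)^{2p₃+1}h₃(xⁿ)² + g(u,xⁿ) and S(u,x³,xⁿ) = (uF₂,ᵤ),ᵤ + εu F₂,₃ᵤ + ε²u(m₃₃²),ᵤ where m₃₃ = (x³−εu)^{p₃}h₃, the formula H = (1/u)[−∫ᵘ S(z, x³ − εu + εz, xⁿ)dz + A(x³−εu, xⁿ)] evaluates to H = −ε²(x³−εu)^{2p₃−1}[x³ − ε(p₃+1)u]h₃² − g,ᵤ + u⁻¹A(x³−εu, xⁿ). -/

import Mathlib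

/-- With `F₂ = −(ε/(2p₃+1))(x³−εu)^{2p₃+1}h₃² + g(u,xⁿ)`,
`m₃₃ = (x³−εu)^{p₃}h₃`, and `S = (uF₂,ᵤ),ᵤ + εu F₂,₃ᵤ + ε²u(m₃₃²),ᵤ`, the closed form
`H = −ε²(x³−εu)^{2p₃−1}[x³−ε(p₃+1)u]h₃² − g,ᵤ + u⁻¹A(x³−εu,xⁿ)` satisfies the defining
integral relation, i.e. along each characteristic `x³ − εu = ξ` one has
`∂ᵤ(u·H(u, ξ+εu, xⁿ)) = −S(u, ξ+εu, xⁿ)`. -/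
theorem stmt_11 {α : Type*} (ε p : ℝ) (hε : ε ≠ 0) (h2p : 2 * p + 1 ≠ 0)
    (h₃ : α → ℝ) (g : ℝ → α → ℝ) (A : ℝ → α → ℝ)
    (hg : ∀ x, ContDiff ℝ (⊤ : ℕ∞) (fun u => g u x))
    (F₂ m₃₃ S H : ℝ → ℝ → α → ℝ)
    (hF₂ : ∀ u x3 x, F₂ u x3 x =
      -(ε / (2 * p + 1)) * (x3 - ε * u) ^ (2 * p + 1) * (h₃ x) ^ 2 + g u x)
    (hm₃₃ : ∀ u x3 x, m₃₃ u x3 x = (x3 - ε * u) ^ p * h₃ x)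
    (hS : ∀ u x3 x, S u x3 x =
      deriv (fun t => t * deriv (fun s => F₂ s x3 x) t) u
      + ε * u * deriv (fun t => deriv (fun y => F₂ t y x) x3) u
      + ε ^ 2 * u * deriv (fun t => (m₃₃ t x3 x) ^ 2) u)
    (hH : ∀ u x3 x, H u x3 x =
      -ε ^ 2 * (x3 - ε * u) ^ (2 * p - 1) * (x3 - ε * (p + 1) * u) * (h₃ x) ^ 2
      - deriv (fun t => g t x) u + u⁻¹ * A (x3 - ε * u) x) :
    ∀ (x : α) (ξ : ℝ), 0 < ξ → ∀ u : ℝ, 0 < u →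
      deriv (fun z => z * H z (ξ + ε * z) x) u = -(S u (ξ + ε * u) x) := by
  intro x ξ hξ u hu
  have hG : ContDiff ℝ (⊤ : ℕ∞) (fun t => g t x) := hg x
  have hGinf : ContDiff ℝ ((⊤ : ℕ∞) : WithTop ℕ∞) (fun t => g t x) := hG.of_le (by simp)
  have hG'cd : ContDiff ℝ ((⊤ : ℕ∞) : WithTop ℕ∞) (deriv (fun t => g t x)) :=
    (contDiff_infty_iff_deriv.mp hGinf).2
  have hGat : ∀ t : ℝ, HasDerivAt (fun t => g t x) (deriv (fun t => g t x) t) t :=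
    fun t => ((hG.differentiable (by simp)) t).hasDerivAt
  have hG'at : HasDerivAt (deriv (fun t => g t x))
      (deriv (deriv (fun t => g t x)) u) u :=
    ((hG'cd.differentiable (by simp)) u).hasDerivAt
  set c : ℝ := ξ + ε * u with hc
  have hcu : c - ε * u = ξ := by rw [hc]; ring
  have hξ0 : ξ ≠ 0 := hξ.ne'
  have hne : c - ε * u ≠ 0 := by rw [hcu]; exact hξ0
  -- derivative of (c - ε s)^q
  have L1 : ∀ (q t : ℝ), c - ε * t ≠ 0 →
      HasDerivAt (fun s : ℝ => (c - ε * s) ^ q) (-ε * q * (c - ε * t) ^ (q - 1)) t := by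
    intro q t ht
    have h0 : HasDerivAt (fun s : ℝ => c - ε * s) (-ε) t := by
      simpa [Pi.sub_def] using (hasDerivAt_const t c).sub ((hasDerivAt_id' t).const_mul ε)
    exact h0.rpow_const (Or.inl ht)
  have hev : ∀ᶠ t in nhds u, c - ε * t ≠ 0 := by
    have hco : ContinuousAt (fun t : ℝ => c - ε * t) u := by fun_prop
    exact hco.eventually_ne (by rw [hcu]; exact hξ0)
  -- inner u-derivative of F₂
  have hFs : ∀ t : ℝ, c - ε * t ≠ 0 →
      deriv (fun s => F₂ s c x) t
        = ε ^ 2 * (c - ε * t) ^ (2 * p) * (h₃ x) ^ 2 + deriv (fun t => g t x) t := by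
    intro t ht
    have hd := (((L1 (2 * p + 1) t ht).const_mul (-(ε / (2 * p + 1)))).mul_const
      ((h₃ x) ^ 2)).add (hGat t)
    have hfn : (fun s => F₂ s c x)
        = fun s => -(ε / (2 * p + 1)) * (c - ε * s) ^ (2 * p + 1) * (h₃ x) ^ 2 + g s x := by
      funext s; rw [hF₂]
    simp only [Pi.add_def] at hd
    rw [hfn, hd.deriv, show (2 * p + 1 - 1 : ℝ) = 2 * p from by ring]
    field_simp
  have hT1func : (fun t => t * deriv (fun s => F₂ s c x) t)
      =ᶠ[nhds u] fun t => t * (ε ^ 2 * (c - ε * t) ^ (2 * p) * (h₃ x) ^ 2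
        + deriv (fun t => g t x) t) := hev.mono fun t ht => by simp only [hFs t ht]
  have hT1 : deriv (fun t => t * deriv (fun s => F₂ s c x) t) u
      = ε ^ 2 * ξ ^ (2 * p) * (h₃ x) ^ 2 + deriv (fun t => g t x) u
        + u * (ε ^ 2 * (-ε * (2 * p) * ξ ^ (2 * p - 1)) * (h₃ x) ^ 2
          + deriv (deriv (fun t => g t x)) u) := by
    rw [hT1func.deriv_eq]
    have hd := (hasDerivAt_id' u).mul
      ((((L1 (2 * p) u hne).const_mul (ε ^ 2)).mul_const ((h₃ x) ^ 2)).add hG'at)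
    simp only [Pi.add_def, Pi.mul_def] at hd
    rw [hd.deriv, hcu]
    ring
  -- x3-derivative of F₂
  have hF3 : ∀ t : ℝ, c - ε * t ≠ 0 →
      deriv (fun y => F₂ t y x) c = -ε * (c - ε * t) ^ (2 * p) * (h₃ x) ^ 2 := by
    intro t ht
    have hb : HasDerivAt (fun y : ℝ => y - ε * t) 1 c := by
      simpa using (hasDerivAt_id' c).sub_const (ε * t)
    have hrp : HasDerivAt (fun y : ℝ => (y - ε * t) ^ (2 * p + 1))
        (1 * (2 * p + 1) * (c - ε * t) ^ (2 * p + 1 - 1)) c :=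
      hb.rpow_const (Or.inl ht)
    have hd := ((hrp.const_mul (-(ε / (2 * p + 1)))).mul_const ((h₃ x) ^ 2)).add_const (g t x)
    have hfn : (fun y => F₂ t y x)
        = fun y => -(ε / (2 * p + 1)) * (y - ε * t) ^ (2 * p + 1) * (h₃ x) ^ 2 + g t x := by
      funext y; rw [hF₂]
    rw [hfn, hd.deriv, show (2 * p + 1 - 1 : ℝ) = 2 * p from by ring]
    field_simp
  have hT2func : (fun t => deriv (fun y => F₂ t y x) c)
      =ᶠ[nhds u] fun t => -ε * (c - ε * t) ^ (2 * p) * (h₃ x) ^ 2 :=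
    hev.mono fun t ht => hF3 t ht
  have hT2 : deriv (fun t => deriv (fun y => F₂ t y x) c) u
      = -ε * (-ε * (2 * p) * ξ ^ (2 * p - 1)) * (h₃ x) ^ 2 := by
    rw [hT2func.deriv_eq]
    have hd := ((L1 (2 * p) u hne).const_mul (-ε)).mul_const ((h₃ x) ^ 2)
    rw [hd.deriv, hcu]
  -- m₃₃² derivative
  have hT3 : deriv (fun t => (m₃₃ t c x) ^ 2) u
      = 2 * p * (-ε) * ξ ^ (2 * p - 1) * (h₃ x) ^ 2 := by
    have hd := ((L1 p u hne).mul_const (h₃ x)).pow 2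
    have hfn : (fun t => (m₃₃ t c x) ^ 2)
        = fun t => ((c - ε * t) ^ p * h₃ x) ^ 2 := by
      funext t; rw [hm₃₃]
    have e2 : ξ ^ p * ξ ^ (p - 1) = ξ ^ (2 * p - 1) := by
      rw [← Real.rpow_add hξ, show p + (p - 1) = 2 * p - 1 from by ring]
    simp only [Pi.pow_def] at hd
    rw [hfn, hd.deriv, hcu, ← e2]
    norm_num
    ring
  -- left-hand side
  have hz : ∀ᶠ z in nhds u, z ≠ 0 := eventually_ne_nhds hu.ne'
  have hLfunc : (fun z => z * H z (ξ + ε * z) x)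
      =ᶠ[nhds u] fun z => z * (-ε ^ 2 * ξ ^ (2 * p - 1)
        * (ξ + ε * z - ε * (p + 1) * z) * (h₃ x) ^ 2)
        - z * deriv (fun t => g t x) z + A ξ x := by
    filter_upwards [hz] with z hz0
    rw [hH, show ξ + ε * z - ε * z = ξ from by ring]
    field_simp
  have hlin : HasDerivAt (fun z : ℝ => ξ + ε * z - ε * (p + 1) * z)
      (ε - ε * (p + 1)) u := by
    have h1 : HasDerivAt (fun z : ℝ => ξ + ε * z) ε u := by
      simpa [Pi.add_def] using (hasDerivAt_const u ξ).add ((hasDerivAt_id' u).const_mul ε)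
    simpa [Pi.sub_def] using h1.sub ((hasDerivAt_id' u).const_mul (ε * (p + 1)))
  have hLd := (((hasDerivAt_id' u).mul
      ((hlin.const_mul (-ε ^ 2 * ξ ^ (2 * p - 1))).mul_const ((h₃ x) ^ 2))).sub
      ((hasDerivAt_id' u).mul hG'at)).add_const (A ξ x)
  simp only [Pi.add_def, Pi.mul_def, Pi.sub_def] at hLd
  rw [hLfunc.deriv_eq, hLd.deriv, hS, hT1, hT2, hT3,
    show ξ ^ (2 * p) = ξ ^ (2 * p - 1 + 1) from by norm_num,
    Real.rpow_add_one hξ0]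
  ring
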